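/- arXiv:1710.02816 — 4 statements merged into one kernel-verified Lean document; each statement's English description precedes it below -/
import Mathlib

section
/- Let M be a compact metric space, M_f(M) the (nonempty, compact, convex) set of f-invariant Borel probability measures for a homeomorphism f, and h : M_f(M) → [0,∞) an affine, upper semicontinuous, bounded function. Define P(φ) = sup{h(μ) + ∫φ dμ : μ ∈ M_f(M)}. Then for every ν ∈ M_f(M): h(ν) = inf{P(φ) - ∫φ dν : φ ∈ C(M,ℝ)}. -/
/-!
Embed the invariant measures into the locally convex space `C(M, ℝ) → ℝ` (product topology) by
`μ ↦ (φ ↦ ∫ φ dμ)`; for compact `M` this is a topological embedding of the weak* topology.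
If `b > h ν`, upper semicontinuity keeps `(ν, b)` off the closure of the image of the hypograph
of `h`, which is convex because `h` is affine, so Hahn–Banach separates them. A continuous
functional on a product of lines is a finite combination of coordinates, so in place of the Riesz
representation the separating functional reads `(μ, t) ↦ ∫ ψ dμ + t d`. Comparing its values
at `(ν, h ν)` and `(ν, b)` gives `d > 0`, and then `φ = ψ / d` has `P φ - ∫ φ dν < b`.
-/

open MeasureTheory Filter Topology

theorem ContinuousLinearMap.exists_finsupp_eq_sum_mul_apply {ι 𝕜 : Type*}
    [NontriviallyNormedField 𝕜] (g : (ι → 𝕜) →L[𝕜] 𝕜) :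
    ∃ c : ι →₀ 𝕜, ∀ x, g x = c.sum fun i a => a * x i := by
  have hg : g.toLinearMap ∈ Submodule.span 𝕜 (Set.range fun i => LinearMap.proj i) :=
    (LinearMap.mem_span_iff_continuous _).2 g.continuous
  obtain ⟨c, hc⟩ := Finsupp.mem_span_range_iff_exists_finsupp.1 hg
  refine ⟨c, fun x => ?_⟩
  rw [← ContinuousLinearMap.coe_coe g, ← hc]
  simp [Finsupp.sum]

theorem UpperSemicontinuousOn.notMem_closure_hypograph {X β : Type*} [TopologicalSpace X]
    [LinearOrder β] [TopologicalSpace β] [OrderTopology β] [DenselyOrdered β]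
    {s : Set X} {h : X → β} (hh : UpperSemicontinuousOn h s) {x : X} (hx : x ∈ s) {b : β}
    (hb : h x < b) : (x, b) ∉ closure {p : X × β | p.1 ∈ s ∧ p.2 ≤ h p.1} := by
  obtain ⟨c, hxc, hcb⟩ := exists_between hb
  obtain ⟨U, hUo, hxU, hUs⟩ := mem_nhdsWithin.1 (hh x hx c hxc)
  rw [mem_closure_iff_nhds]
  push Not
  refine ⟨U ×ˢ Set.Ioi c, prod_mem_nhds (hUo.mem_nhds hxU) (Ioi_mem_nhds hcb), ?_⟩
  refine Set.eq_empty_of_forall_notMem ?_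
  rintro ⟨y, r⟩ ⟨⟨hyU, hcr⟩, hys, hry⟩
  exact (hry.trans_lt (hUs ⟨hyU, hys⟩)).not_gt hcr

theorem convex_image_hypograph {X E : Type*} [AddCommGroup E] [Module ℝ E] {s : Set X}
    (L : X → E) (h : X → ℝ)
    (hmix : ∀ x ∈ s, ∀ y ∈ s, ∀ a b : ℝ, 0 ≤ a → 0 ≤ b → a + b = 1 →
      ∃ z ∈ s, L z = a • L x + b • L y ∧ a * h x + b * h y ≤ h z) :
    Convex ℝ (Prod.map L id '' {p : X × ℝ | p.1 ∈ s ∧ p.2 ≤ h p.1}) := by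
  rintro _ ⟨⟨x, t⟩, ⟨hx, htx⟩, rfl⟩ _ ⟨⟨y, r⟩, ⟨hy, hry⟩, rfl⟩ a b ha hb hab
  obtain ⟨z, hz, hLz, hhz⟩ := hmix x hx y hy a b ha hb hab
  refine ⟨(z, a * t + b * r), ⟨hz, ?_⟩, by simp [hLz]⟩
  calc a * t + b * r ≤ a * h x + b * h y := by dsimp only at htx hry; gcongr
    _ ≤ h z := hhz

namespace MeasureTheory.ProbabilityMeasure

variable {M : Type*} [MeasurableSpace M]

theorem exists_toMeasure_eq_add_smul (μ₁ μ₂ : ProbabilityMeasure M) {a b : ℝ} (ha : 0 ≤ a)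
    (hb : 0 ≤ b) (hab : a + b = 1) :
    ∃ ρ : ProbabilityMeasure M,
      ρ.toMeasure = ENNReal.ofReal a • μ₁.toMeasure + ENNReal.ofReal b • μ₂.toMeasure := by
  refine ⟨⟨_, ⟨?_⟩⟩, rfl⟩
  simp [← ENNReal.ofReal_add ha hb, hab]

variable [TopologicalSpace M]

noncomputable def integrals (μ : ProbabilityMeasure M) : C(M, ℝ) → ℝ :=
  fun φ => ∫ x, φ x ∂μ

variable [CompactSpace M] [OpensMeasurableSpace M]

theorem integrable_continuousMap (φ : C(M, ℝ)) (μ : ProbabilityMeasure M) :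
    Integrable φ (μ : Measure M) :=
  φ.continuous.integrable_of_hasCompactSupport (.of_compactSpace _)

theorem isInducing_integrals :
    IsInducing (integrals : ProbabilityMeasure M → C(M, ℝ) → ℝ) := by
  refine isInducing_iff_nhds.2 fun μ => le_antisymm ?_ ?_
  · refine tendsto_iff_comap.1 (tendsto_pi_nhds.2 fun φ => ?_)
    exact tendsto_iff_forall_integral_tendsto.1 tendsto_id (.mkOfCompact φ)
  · refine (tendsto_id' (x := comap _ _)).1 (tendsto_iff_forall_integral_tendsto.2 fun φ => ?_)
    exact tendsto_pi_nhds.1 (tendsto_comap (f := integrals)) φ.toContinuousMap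

theorem integrals_eq_add_smul {μ₁ μ₂ ρ : ProbabilityMeasure M} {a b : ℝ} (ha : 0 ≤ a)
    (hb : 0 ≤ b)
    (hρ : ρ.toMeasure = ENNReal.ofReal a • μ₁.toMeasure + ENNReal.ofReal b • μ₂.toMeasure) :
    ρ.integrals = a • μ₁.integrals + b • μ₂.integrals := by
  funext φ
  simp only [integrals, hρ, Pi.add_apply, Pi.smul_apply, smul_eq_mul]
  rw [integral_add_measure ((integrable_continuousMap φ μ₁).smul_measure ENNReal.ofReal_ne_top)
    ((integrable_continuousMap φ μ₂).smul_measure ENNReal.ofReal_ne_top), integral_smul_measure,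
    integral_smul_measure, ENNReal.toReal_ofReal ha, ENNReal.toReal_ofReal hb, smul_eq_mul,
    smul_eq_mul]

theorem exists_continuousMap_apply_integrals_eq (g : (C(M, ℝ) → ℝ) →L[ℝ] ℝ) :
    ∃ ψ : C(M, ℝ), ∀ μ : ProbabilityMeasure M, g μ.integrals = ∫ x, ψ x ∂μ := by
  obtain ⟨c, hc⟩ := g.exists_finsupp_eq_sum_mul_apply
  refine ⟨c.sum fun φ a => a • φ, fun μ => ?_⟩
  simp only [hc, integrals, Finsupp.sum, ContinuousMap.coe_sum, ContinuousMap.coe_smul,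
    Finset.sum_apply, Pi.smul_apply, smul_eq_mul]
  rw [integral_finsetSum _ fun φ _ => (integrable_continuousMap φ μ).const_mul _]
  simp only [integral_const_mul]

theorem exists_continuousMap_apply_integrals_prod_eq (F : (C(M, ℝ) → ℝ) × ℝ →L[ℝ] ℝ) :
    ∃ (ψ : C(M, ℝ)) (d : ℝ), ∀ (μ : ProbabilityMeasure M) (t : ℝ),
      F (μ.integrals, t) = ∫ x, ψ x ∂μ + t * d := by
  obtain ⟨ψ, hψ⟩ := exists_continuousMap_apply_integrals_eq (F.comp (.inl ℝ _ _))
  refine ⟨ψ, F (0, 1), fun μ t => ?_⟩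
  rw [← hψ, ← smul_eq_mul, ← map_smul, ContinuousLinearMap.comp_apply, ← map_add]
  simp

end MeasureTheory.ProbabilityMeasure

theorem MeasureTheory.Measure.map_add_smul_eq_self {M : Type*} [MeasurableSpace M] {f : M → M}
    (hf : Measurable f) {μ₁ μ₂ : Measure M} (h₁ : μ₁.map f = μ₁) (h₂ : μ₂.map f = μ₂)
    (c₁ c₂ : ENNReal) : (c₁ • μ₁ + c₂ • μ₂).map f = c₁ • μ₁ + c₂ • μ₂ := by
  rw [Measure.map_add _ _ hf, Measure.map_smul, Measure.map_smul, h₁, h₂]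

theorem exists_sub_integral_lt_of_forall_integral_add_mul_lt {M : Type*} [TopologicalSpace M]
    [MeasurableSpace M] {s : Set (ProbabilityMeasure M)} {h : ProbabilityMeasure M → ℝ}
    {P : C(M, ℝ) → ℝ}
    (hP : ∀ φ : C(M, ℝ), IsLUB {x : ℝ | ∃ μ ∈ s, x = h μ + ∫ y, φ y ∂(μ : Measure M)} (P φ))
    {ν : ProbabilityMeasure M} (hν : ν ∈ s) {b : ℝ} (hνb : h ν < b) {ψ : C(M, ℝ)} {d u : ℝ}
    (hbelow : ∀ μ ∈ s, ∫ x, ψ x ∂(μ : Measure M) + h μ * d < u)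
    (habove : u < ∫ x, ψ x ∂(ν : Measure M) + b * d) :
    ∃ φ : C(M, ℝ), P φ - ∫ y, φ y ∂(ν : Measure M) < b := by
  have hd : 0 < d := by nlinarith [hbelow ν hν]
  have hφ (μ : ProbabilityMeasure M) :
      ∫ x, (d⁻¹ • ψ) x ∂(μ : Measure M) = (∫ x, ψ x ∂(μ : Measure M)) / d := by
    simp only [ContinuousMap.coe_smul, Pi.smul_apply, smul_eq_mul, integral_const_mul]
    ring
  have hPφ : P (d⁻¹ • ψ) ≤ u / d := by
    refine (hP _).2 ?_
    rintro _ ⟨μ, hμ, rfl⟩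
    rw [hφ, le_div_iff₀ hd, add_mul, div_mul_cancel₀ _ hd.ne']
    linarith [hbelow μ hμ]
  have hνφ : u / d < (∫ x, ψ x ∂(ν : Measure M)) / d + b := by
    rw [div_add' _ _ _ hd.ne', div_lt_div_iff_of_pos_right hd]
    linarith
  exact ⟨d⁻¹ • ψ, by linarith [hφ ν]⟩

open ProbabilityMeasure in
theorem stmt_12_general {M : Type*} [MetricSpace M] [CompactSpace M]
    [MeasurableSpace M] [BorelSpace M]
    (f : M ≃ₜ M)
    (Minv : Set (ProbabilityMeasure M))
    (hMinv : Minv = {μ : ProbabilityMeasure M |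
      Measure.map f μ.toMeasure = μ.toMeasure})
    (h : ProbabilityMeasure M → ℝ)
    (haff : ∀ μ ∈ Minv, ∀ ν ∈ Minv, ∀ ρ ∈ Minv, ∀ a b : ℝ, 0 ≤ a → 0 ≤ b →
      a + b = 1 →
      ρ.toMeasure = ENNReal.ofReal a • μ.toMeasure + ENNReal.ofReal b • ν.toMeasure →
      h ρ = a * h μ + b * h ν)
    (husc : UpperSemicontinuousOn h Minv)
    (P : C(M, ℝ) → ℝ)
    (hP : ∀ φ : C(M, ℝ),
      IsLUB {x : ℝ | ∃ μ ∈ Minv, x = h μ + ∫ y, φ y ∂(μ : Measure M)} (P φ)) :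
    ∀ ν ∈ Minv,
      IsGLB {x : ℝ | ∃ φ : C(M, ℝ), x = P φ - ∫ y, φ y ∂(ν : Measure M)} (h ν) := by
  intro ν hν
  refine ⟨?_, fun b hb => ?_⟩
  · rintro _ ⟨φ, rfl⟩
    linarith [(hP φ).1 ⟨ν, hν, rfl⟩]
  by_contra! hνb
  have hmix : ∀ μ₁ ∈ Minv, ∀ μ₂ ∈ Minv, ∀ a c : ℝ, 0 ≤ a → 0 ≤ c → a + c = 1 →
      ∃ ρ ∈ Minv, ρ.integrals = a • μ₁.integrals + c • μ₂.integrals ∧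
        a * h μ₁ + c * h μ₂ ≤ h ρ := by
    intro μ₁ hμ₁ μ₂ hμ₂ a c ha hc hac
    obtain ⟨ρ, hρ⟩ := exists_toMeasure_eq_add_smul μ₁ μ₂ ha hc hac
    have hρMinv : ρ ∈ Minv := by
      subst hMinv
      rw [Set.mem_ofPred_eq, hρ]
      exact Measure.map_add_smul_eq_self f.measurable hμ₁ hμ₂ _ _
    exact ⟨ρ, hρMinv, integrals_eq_add_smul ha hc hρ,
      (haff μ₁ hμ₁ μ₂ hμ₂ ρ hρMinv a c ha hc hac hρ).ge⟩
  set S := Prod.map integrals id '' {p : ProbabilityMeasure M × ℝ | p.1 ∈ Minv ∧ p.2 ≤ h p.1}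
  have hνS : (ν.integrals, b) ∉ closure S := by
    refine fun hmem => husc.notMem_closure_hypograph hν hνb ?_
    rwa [(isInducing_integrals.prodMap .id).closure_eq_preimage_closure_image]
  obtain ⟨F, u, hFS, hFν⟩ :=
    geometric_hahn_banach_closed_point (convex_image_hypograph _ h hmix).closure
      isClosed_closure hνS
  obtain ⟨ψ, d, hF⟩ := exists_continuousMap_apply_integrals_prod_eq F
  obtain ⟨φ, hφ⟩ := exists_sub_integral_lt_of_forall_integral_add_mul_lt hP hν hνb
    (fun μ hμ => hF μ (h μ) ▸ hFS _ (subset_closure ⟨(μ, h μ), ⟨hμ, le_rfl⟩, rfl⟩))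
    (hF ν b ▸ hFν)
  exact (hb ⟨φ, rfl⟩).not_gt hφ

/-- Theorem D(2) in abstract form: if `h` is affine, bounded, nonnegative and upper
semicontinuous (weak* topology) on the nonempty set of `f`-invariant probability
measures, and `P(φ) = sup { h(μ) + ∫ φ dμ }`, then for every invariant `ν`,
`h(ν) = inf { P(φ) - ∫ φ dν : φ ∈ C(M,ℝ) }`. -/
theorem stmt_12 {M : Type*} [MetricSpace M] [CompactSpace M]
    [MeasurableSpace M] [BorelSpace M]
    (f : M ≃ₜ M)
    (Minv : Set (ProbabilityMeasure M))
    (hMinv : Minv = {μ : ProbabilityMeasure M |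
      Measure.map f μ.toMeasure = μ.toMeasure})
    (hne : Minv.Nonempty)
    (h : ProbabilityMeasure M → ℝ)
    (hpos : ∀ μ ∈ Minv, 0 ≤ h μ)
    (hbdd : ∃ C : ℝ, ∀ μ ∈ Minv, h μ ≤ C)
    (haff : ∀ μ ∈ Minv, ∀ ν ∈ Minv, ∀ ρ ∈ Minv, ∀ a b : ℝ, 0 ≤ a → 0 ≤ b →
      a + b = 1 →
      ρ.toMeasure = ENNReal.ofReal a • μ.toMeasure + ENNReal.ofReal b • ν.toMeasure →
      h ρ = a * h μ + b * h ν)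
    (husc : UpperSemicontinuousOn h Minv)
    (P : C(M, ℝ) → ℝ)
    (hP : ∀ φ : C(M, ℝ),
      IsLUB {x : ℝ | ∃ μ ∈ Minv, x = h μ + ∫ y, φ y ∂(μ : Measure M)} (P φ)) :
    ∀ ν ∈ Minv,
      IsGLB {x : ℝ | ∃ φ : C(M, ℝ), x = P φ - ∫ y, φ y ∂(ν : Measure M)} (h ν) :=
  stmt_12_general f Minv hMinv h haff husc P hP
end

section
/- Let M be a compact metric space, M_f(M) the compact convex set of f-invariant Borel probability measures, h : M_f(M) → [0,∞) affine, bounded and upper semicontinuous, and P(φ) = sup{h(μ)+∫φ dμ : μ ∈ M_f(M)}. For φ ∈ C(M,ℝ), a finite signed Borel measure μ is a tangent functional to P at φ (i.e., P(φ+ψ)-P(φ) ≥ ∫ψ dμ for all ψ) if and only if μ ∈ M_f(M) and h(μ) + ∫φ dμ = P(φ). -/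
open MeasureTheory Filter Topology BoundedContinuousFunction

section Aux

variable {M : Type*} [MetricSpace M] [CompactSpace M] [MeasurableSpace M] [BorelSpace M]

lemma aux_integrable (ψ : C(M, ℝ)) (μ : Measure M) [IsFiniteMeasure μ] :
    Integrable (fun x => ψ x) μ := by
  exact (mkOfCompact ψ).integrable μ

omit [CompactSpace M] in
lemma aux_integral_le_const {μ : Measure M} [CompactSpace M] [IsProbabilityMeasure μ]
    {ψ : C(M, ℝ)} {c : ℝ} (hc : ∀ x, ψ x ≤ c) : ∫ x, ψ x ∂μ ≤ c := by
  calc ∫ x, ψ x ∂μ ≤ ∫ _, c ∂μ := integral_mono (aux_integrable ψ μ) (integrable_const c) hc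
  _ = c := by simp

lemma aux_measure_ext {μ ν : Measure M} [IsFiniteMeasure μ] [IsFiniteMeasure ν]
    (hh : ∀ ψ : C(M, ℝ), ∫ x, ψ x ∂μ = ∫ x, ψ x ∂ν) : μ = ν := by
  apply ext_of_forall_lintegral_eq_of_IsFiniteMeasure
  intro f
  have h1 : ∫⁻ x, f x ∂μ = ENNReal.ofReal (∫ x, (f x : ℝ) ∂μ) :=
    lintegral_coe_eq_integral _ (f.integrable_of_nnreal μ)
  have h2 : ∫⁻ x, f x ∂ν = ENNReal.ofReal (∫ x, (f x : ℝ) ∂ν) :=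
    lintegral_coe_eq_integral _ (f.integrable_of_nnreal ν)
  rw [h1, h2]
  have h3 := hh ⟨fun x => (f x : ℝ), NNReal.continuous_coe.comp f.continuous⟩
  simp only [ContinuousMap.coe_mk] at h3
  rw [h3]

lemma aux_neg_zero {p n : Measure M} [IsFiniteMeasure p] [IsFiniteMeasure n]
    {S : Set M} (hSm : MeasurableSet S) (hpS : p S = 0) (hnS : n Sᶜ = 0)
    (hint : ∀ ψ : C(M, ℝ), (∀ x, ψ x ∈ Set.Icc (0 : ℝ) 1) →
      ∫ x, ψ x ∂n ≤ ∫ x, ψ x ∂p) :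
    n = 0 := by
  by_contra hn0
  have hpos : 0 < n S := by
    rcases (zero_le : 0 ≤ n S).eq_or_lt with hz | hlt
    · exfalso
      apply hn0
      apply Measure.measure_univ_eq_zero.mp
      have h' : n Set.univ ≤ n S + n Sᶜ := by
        rw [← Set.union_compl_self S]; exact measure_union_le _ _
      rw [← hz, hnS] at h'
      simpa using h'
    · exact hlt
  set ε := (n S).toReal with hε
  have hε0 : 0 < ε := ENNReal.toReal_pos hpos.ne' (measure_ne_top n S)
  obtain ⟨K, hKS, hKc, hKn⟩ := hSm.exists_isCompact_lt_add (μ := n) (measure_ne_top n S)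
    (ε := ENNReal.ofReal (ε / 3)) (by simp [hε0.le]; positivity)
  have hpK : p K < ENNReal.ofReal (ε / 3) := by
    have : p K ≤ p S := measure_mono hKS
    rw [hpS] at this
    simpa [nonpos_iff_eq_zero.mp this] using ENNReal.ofReal_pos.mpr (by positivity)
  obtain ⟨U, hKU, hUo, hpU⟩ := Set.exists_isOpen_lt_of_lt (μ := p) K _ hpK
  obtain ⟨ψ, hψ0, hψ1, hψIcc⟩ := exists_continuous_zero_one_of_isCompact' hKc
    hUo.isClosed_compl (Set.disjoint_left.mpr fun x hx hx' => hx' (hKU hx))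
  have hKmeas : MeasurableSet K := hKc.isClosed.measurableSet
  have hUmeas : MeasurableSet U := hUo.measurableSet
  have hind1 : Integrable (K.indicator fun _ => (1 : ℝ)) n :=
    (integrable_indicator_iff hKmeas).mpr (integrableOn_const (measure_lt_top n K).ne)
  have hind2 : Integrable (U.indicator fun _ => (1 : ℝ)) p :=
    (integrable_indicator_iff hUmeas).mpr (integrableOn_const (measure_lt_top p U).ne)
  have h1 : (n K).toReal ≤ ∫ x, ψ x ∂n := by
    have : ∫ x, K.indicator (fun _ => (1 : ℝ)) x ∂n ≤ ∫ x, ψ x ∂n := by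
      refine integral_mono hind1 (aux_integrable ψ n) fun x => ?_
      by_cases hx : x ∈ K
      · simp [Set.indicator_of_mem hx, hψ1 hx]
      · simpa [Set.indicator_of_notMem hx] using (hψIcc x).1
    simpa [integral_indicator_const, hKmeas, measureReal_def] using this
  have h2 : ∫ x, ψ x ∂p ≤ (p U).toReal := by
    have : ∫ x, ψ x ∂p ≤ ∫ x, U.indicator (fun _ => (1 : ℝ)) x ∂p := by
      refine integral_mono (aux_integrable ψ p) hind2 fun x => ?_
      by_cases hx : x ∈ U
      · simp [Set.indicator_of_mem hx, (hψIcc x).2]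
      · have : ψ x = 0 := hψ0 hx
        simp [Set.indicator_of_notMem hx, this]
    simpa [integral_indicator_const, hUmeas, measureReal_def] using this
  have h3 := hint ψ hψIcc
  have h4 : (p U).toReal < ε / 3 := ENNReal.toReal_lt_of_lt_ofReal hpU
  have h5 : 2 * ε / 3 < (n K).toReal := by
    have := ENNReal.toReal_lt_toReal (measure_ne_top n S)
      (ENNReal.add_ne_top.mpr ⟨measure_ne_top n K, ENNReal.ofReal_ne_top⟩) |>.mpr hKn
    rw [ENNReal.toReal_add (measure_ne_top n K) ENNReal.ofReal_ne_top,
      ENNReal.toReal_ofReal (by positivity)] at this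
    linarith [this]
  linarith

/-- Integration against a probability measure, as an element of the weak dual of `C(M, ℝ)`. -/
noncomputable def intWD (m : ProbabilityMeasure M) : WeakDual ℝ C(M, ℝ) :=
  LinearMap.mkContinuous
    { toFun := fun ψ => ∫ x, ψ x ∂(m : Measure M)
      map_add' := fun ψ χ => by
        simp only [ContinuousMap.add_apply]
        exact integral_add (aux_integrable _ _) (aux_integrable _ _)
      map_smul' := fun c ψ => by
        simp only [ContinuousMap.smul_apply, smul_eq_mul, RingHom.id_apply]
        rw [integral_const_mul] }
    1
    (fun ψ => by
      have h := (mkOfCompact ψ).norm_integral_le_norm (μ := (m : Measure M))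
      simpa [BoundedContinuousFunction.norm_mkOfCompact, one_mul] using h)

@[simp] lemma intWD_apply (m : ProbabilityMeasure M) (ψ : C(M, ℝ)) :
    intWD m ψ = ∫ x, ψ x ∂(m : Measure M) := rfl

end Aux

instance aux_weakDual_locallyConvex {E : Type*} [NormedAddCommGroup E] [NormedSpace ℝ E] :
    LocallyConvexSpace ℝ (WeakDual ℝ E) :=
  WeakBilin.locallyConvexSpace (B := topDualPairing ℝ E)

lemma aux_weakDual_eval {E : Type*} [NormedAddCommGroup E] [NormedSpace ℝ E]
    (G : WeakDual ℝ E →L[ℝ] ℝ) : ∃ ψ : E, ∀ x : WeakDual ℝ E, G x = x ψ := by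
  classical
  have hemb : IsEmbedding fun (x : WeakDual ℝ E) (y : E) => x y := by
    have : Function.Injective (topDualPairing ℝ E) := by
      intro a b hab
      apply ContinuousLinearMap.coe_injective
      ext z
      exact congrArg (fun (K : E →ₗ[ℝ] ℝ) => K z) hab
    exact WeakBilin.isEmbedding this
  have h0 : {x : WeakDual ℝ E | |G x| < 1} ∈ 𝓝 (0 : WeakDual ℝ E) := by
    have hc : Continuous fun x : WeakDual ℝ E => |G x| := G.continuous.abs
    have : Tendsto (fun x : WeakDual ℝ E => |G x|) (𝓝 0) (𝓝 |G 0|) := hc.continuousAt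
    rw [map_zero, abs_zero] at this
    exact this.eventually_lt_const one_pos
  rw [hemb.isInducing.nhds_eq_comap, Filter.mem_comap] at h0
  obtain ⟨S, hS, hSsub⟩ := h0
  rw [nhds_pi] at hS
  obtain ⟨I, hIfin, t, htm, hsub2⟩ := Filter.mem_pi.mp hS
  have key : ∀ x : WeakDual ℝ E, (∀ ψ ∈ I, x ψ = 0) → G x = 0 := by
    intro x hx
    by_contra hGx
    have habs : ∀ r : ℝ, |G (r • x)| < 1 := by
      intro r
      apply hSsub
      apply hsub2
      intro ψ hψ
      have hz : (r • x) ψ = 0 := by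
        rw [show (r • x) ψ = r • x ψ from rfl, hx ψ hψ, smul_zero]
      show (r • x) ψ ∈ t ψ
      rw [hz]
      have := mem_of_mem_nhds (htm ψ)
      exact this
    have h2 := habs (2 / G x)
    rw [_root_.map_smul, smul_eq_mul, abs_mul, abs_div] at h2
    rw [div_mul_cancel₀] at h2 <;> simp_all
  have : Finite I := hIfin.to_subtype
  let L : I → (WeakDual ℝ E) →ₗ[ℝ] ℝ := fun ψ =>
    { toFun := fun x => x (ψ : E)
      map_add' := fun x y => rfl
      map_smul' := fun c x => rfl }
  have hker : ⨅ i : I, LinearMap.ker (L i) ≤ LinearMap.ker (G : WeakDual ℝ E →ₗ[ℝ] ℝ) := by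
    intro x hx
    simp only [Submodule.mem_iInf, LinearMap.mem_ker] at hx ⊢
    exact key x fun ψ hψ => hx ⟨ψ, hψ⟩
  have hspan := mem_span_of_iInf_ker_le_ker hker
  have : Fintype I := hIfin.fintype
  obtain ⟨c, hc⟩ := (Submodule.mem_span_range_iff_exists_fun ℝ).mp hspan
  refine ⟨∑ i : I, c i • (i : E), fun x => ?_⟩
  have hx := congrArg (fun K : (WeakDual ℝ E) →ₗ[ℝ] ℝ => K x) hc
  simp only [LinearMap.coe_sum, Finset.sum_apply, LinearMap.smul_apply, smul_eq_mul,
    ContinuousLinearMap.coe_coe, L, LinearMap.coe_mk, AddHom.coe_mk] at hx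
  rw [← hx, map_sum]
  simp [_root_.map_smul]
  rfl

set_option maxHeartbeats 2000000 in
/-- Theorem E in abstract form: a finite signed Borel measure `μ` is a tangent
functional to the pressure-like function `P` at `φ` (i.e. `∫ψ dμ ≤ P(φ+ψ) - P(φ)`
for all `ψ`) if and only if `μ` is an `f`-invariant probability measure which is an
equilibrium state for `φ`, i.e. `h(μ) + ∫φ dμ = P(φ)`. -/
theorem stmt_13 {M : Type*} [MetricSpace M] [CompactSpace M]
    [MeasurableSpace M] [BorelSpace M]
    (f : M ≃ₜ M)
    (Minv : Set (ProbabilityMeasure M))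
    (hMinv : Minv = {ν : ProbabilityMeasure M |
      Measure.map f ν.toMeasure = ν.toMeasure})
    (hne : Minv.Nonempty)
    (h : ProbabilityMeasure M → ℝ)
    (hpos : ∀ ν ∈ Minv, 0 ≤ h ν)
    (hbdd : ∃ C : ℝ, ∀ ν ∈ Minv, h ν ≤ C)
    (haff : ∀ ν₁ ∈ Minv, ∀ ν₂ ∈ Minv, ∀ ρ ∈ Minv, ∀ a b : ℝ, 0 ≤ a → 0 ≤ b →
      a + b = 1 →
      ρ.toMeasure = ENNReal.ofReal a • ν₁.toMeasure + ENNReal.ofReal b • ν₂.toMeasure →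
      h ρ = a * h ν₁ + b * h ν₂)
    (husc : UpperSemicontinuousOn h Minv)
    (P : C(M, ℝ) → ℝ)
    (hP : ∀ χ : C(M, ℝ),
      IsLUB {x : ℝ | ∃ ν ∈ Minv, x = h ν + ∫ y, χ y ∂(ν : Measure M)} (P χ))
    (φ : C(M, ℝ)) (μ : SignedMeasure M) :
    (∀ ψ : C(M, ℝ),
      (∫ x, ψ x ∂μ.toJordanDecomposition.posPart)
        - (∫ x, ψ x ∂μ.toJordanDecomposition.negPart) ≤ P (φ + ψ) - P φ) ↔
    (∃ ν ∈ Minv, (∀ s : Set M, MeasurableSet s → μ s = (ν.toMeasure s).toReal) ∧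
      h ν + ∫ y, φ y ∂(ν : Measure M) = P φ) := by
  classical
  set p := μ.toJordanDecomposition.posPart with hp_def
  set n := μ.toJordanDecomposition.negPart with hn_def
  obtain ⟨S, hSm, hpS, hnS⟩ := μ.toJordanDecomposition.mutuallySingular
  -- the signed measure evaluates as the difference of the parts
  have happly : ∀ s : Set M, MeasurableSet s → μ s = (p s).toReal - (n s).toReal := by
    intro s hs
    conv_lhs => rw [← μ.toSignedMeasure_toJordanDecomposition]
    rw [JordanDecomposition.toSignedMeasure, VectorMeasure.sub_apply,
      Measure.toSignedMeasure_apply_measurable hs, Measure.toSignedMeasure_apply_measurable hs]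
    rfl
  have hPub : ∀ (χ : C(M, ℝ)), ∀ ν' ∈ Minv,
      h ν' + ∫ y, χ y ∂(ν' : Measure M) ≤ P χ :=
    fun χ ν' hν' => (hP χ).1 ⟨ν', hν', rfl⟩
  have hintadd : ∀ (χ ψ : C(M, ℝ)) (m : Measure M) (_ : IsFiniteMeasure m),
      ∫ y, (χ + ψ) y ∂m = ∫ y, χ y ∂m + ∫ y, ψ y ∂m := by
    intro χ ψ m hm
    simp only [ContinuousMap.add_apply]
    exact integral_add (aux_integrable _ _) (aux_integrable _ _)
  constructor
  · -- hard direction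
    intro htang
    -- a general upper bound tool
    have hItop : ∀ (ψ : C(M, ℝ)) (c : ℝ),
        (∀ ν' ∈ Minv, ∫ y, ψ y ∂(ν' : Measure M) ≤ c) →
        (∫ x, ψ x ∂p) - (∫ x, ψ x ∂n) ≤ c := by
      intro ψ c hc
      have h1 := htang ψ
      have h2 : P (φ + ψ) ≤ P φ + c := by
        apply (hP (φ + ψ)).2
        rintro x ⟨ν', hν', rfl⟩
        have h3 := hPub φ ν' hν'
        have h4 := hintadd φ ψ (ν' : Measure M) inferInstance
        have h5 := hc ν' hν'
        rw [h4]
        linarith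
      linarith
    -- nonnegativity
    have hInn : ∀ ψ : C(M, ℝ), (∀ x, 0 ≤ ψ x) → ∫ x, ψ x ∂n ≤ ∫ x, ψ x ∂p := by
      intro ψ hψ
      have := hItop (-ψ) 0 (fun ν' hν' => by
        have hneg : ∫ y, (-ψ) y ∂(ν' : Measure M) = -∫ y, ψ y ∂(ν' : Measure M) := by
          simp only [ContinuousMap.neg_apply]
          exact integral_neg _
        rw [hneg, neg_nonpos]
        exact integral_nonneg fun x => hψ x)
      have hneg1 : ∫ x, (-ψ) x ∂p = -∫ x, ψ x ∂p := by
        simp only [ContinuousMap.neg_apply]; exact integral_neg _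
      have hneg2 : ∫ x, (-ψ) x ∂n = -∫ x, ψ x ∂n := by
        simp only [ContinuousMap.neg_apply]; exact integral_neg _
      rw [hneg1, hneg2] at this
      linarith
    -- the negative part vanishes
    have hn0 : n = 0 := aux_neg_zero hSm hpS hnS (fun ψ hIcc => hInn ψ fun x => (hIcc x).1)
    -- the positive part is a probability measure
    have hone : ∫ x, (1 : C(M, ℝ)) x ∂p = (p Set.univ).toReal := by
      simp [ContinuousMap.one_apply, measureReal_def]
    have hmass1 : (p Set.univ).toReal ≤ 1 := by
      have := hItop 1 1 (fun ν' hν' => by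
        simp [ContinuousMap.one_apply])
      rw [hn0] at this
      simpa [hone, measureReal_def] using this
    have hmass2 : (1 : ℝ) ≤ (p Set.univ).toReal := by
      have := hItop (-1) (-1) (fun ν' hν' => by
        simp [ContinuousMap.neg_apply, ContinuousMap.one_apply])
      rw [hn0] at this
      have hneg : ∫ x, (-1 : C(M, ℝ)) x ∂p = -(p Set.univ).toReal := by
        simp [ContinuousMap.neg_apply, ContinuousMap.one_apply, measureReal_def]
      rw [hneg] at this
      simp at this
      linarith
    have hmass : p Set.univ = 1 := by
      have h1 : (p Set.univ).toReal = 1 := le_antisymm hmass1 hmass2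
      rw [← ENNReal.toReal_eq_one_iff]
      exact h1
    haveI hppr : IsProbabilityMeasure p := ⟨hmass⟩
    set ν : ProbabilityMeasure M := ⟨p, hppr⟩ with hν_def
    have hνcoe : (ν : Measure M) = p := rfl
    -- invariance
    have hinv : ∀ χ : C(M, ℝ), ∫ x, χ (f x) ∂p = ∫ x, χ x ∂p := by
      intro χ
      set ψ : C(M, ℝ) := χ.comp (f : C(M, M)) - χ with hψdef
      have hψapp : ∀ x, ψ x = χ (f x) - χ x := fun x => rfl
      have hz : ∀ ν' ∈ Minv, ∫ y, ψ y ∂(ν' : Measure M) = 0 := by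
        intro ν' hν'
        have hmap : Measure.map f (ν' : Measure M) = (ν' : Measure M) := by
          rw [hMinv] at hν'; exact hν'
        have hcf : ∫ y, χ (f y) ∂(ν' : Measure M) = ∫ y, χ y ∂(ν' : Measure M) := by
          conv_rhs => rw [← hmap]
          rw [integral_map f.continuous.aemeasurable χ.continuous.aestronglyMeasurable]
        have hsub : ∫ y, ψ y ∂(ν' : Measure M)
            = (∫ y, χ (f y) ∂(ν' : Measure M)) - ∫ y, χ y ∂(ν' : Measure M) := by
          simp only [hψapp]
          exact integral_sub (aux_integrable (χ.comp (f : C(M, M))) _) (aux_integrable χ _)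
        rw [hsub, hcf, sub_self]
      have ha := hItop ψ 0 (fun ν' hν' => (hz ν' hν').le)
      have hb := hItop (-ψ) 0 (fun ν' hν' => by
        have : ∫ y, (-ψ) y ∂(ν' : Measure M) = -∫ y, ψ y ∂(ν' : Measure M) := by
          simp only [ContinuousMap.neg_apply]; exact integral_neg _
        rw [this, hz ν' hν', neg_zero])
      rw [hn0] at ha hb
      simp only [Measure.coe_zero, integral_zero_measure, sub_zero] at ha hb
      have hbb : -∫ x, ψ x ∂p ≤ 0 := by
        have : ∫ x, (-ψ) x ∂p = -∫ x, ψ x ∂p := by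
          simp only [ContinuousMap.neg_apply]; exact integral_neg _
        rwa [this] at hb
      have hψ0 : ∫ x, ψ x ∂p = 0 := le_antisymm ha (by linarith)
      have hsubp : ∫ x, ψ x ∂p = (∫ x, χ (f x) ∂p) - ∫ x, χ x ∂p := by
        simp only [hψapp]
        exact integral_sub (aux_integrable (χ.comp (f : C(M, M))) _) (aux_integrable χ _)
      rw [hsubp] at hψ0
      linarith
    have hmapp : Measure.map f p = p := by
      haveI : IsProbabilityMeasure (Measure.map f p) :=
        Measure.isProbabilityMeasure_map f.continuous.aemeasurable
      apply aux_measure_ext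
      intro χ
      rw [integral_map f.continuous.aemeasurable χ.continuous.aestronglyMeasurable]
      exact hinv χ
    have hνMinv : ν ∈ Minv := by
      rw [hMinv]
      exact hmapp
    have hμs : ∀ s : Set M, MeasurableSet s → μ s = ((ν : Measure M) s).toReal := by
      intro s hs
      rw [happly s hs, hn0]
      simp [hνcoe]
    -- equilibrium property
    refine ⟨ν, hνMinv, hμs, ?_⟩
    have hub := hPub φ ν hνMinv
    -- key claim via Hahn-Banach separation
    have hkey : ∀ b : ℝ, h ν < b → P φ - ∫ y, φ y ∂(ν : Measure M) < b := by
      intro b hb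
      -- the (truncated) hypograph of h, viewed in the weak dual
      set C : Set (WeakDual ℝ C(M, ℝ) × ℝ) :=
        {q | ∃ m ∈ Minv, ∃ t : ℝ, 0 ≤ t ∧ t ≤ h m ∧ q = (intWD m, t)} with hCdef
      have hCconv : Convex ℝ C := by
        rintro q₁ ⟨m₁, hm₁, t₁, ht₁0, ht₁, rfl⟩ q₂ ⟨m₂, hm₂, t₂, ht₂0, ht₂, rfl⟩ a b' ha hb' hab
        have hρmeas : IsProbabilityMeasure
            (ENNReal.ofReal a • (m₁ : Measure M) + ENNReal.ofReal b' • (m₂ : Measure M)) := by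
          constructor
          simp only [Measure.coe_add, Pi.add_apply, Measure.coe_smul, Pi.smul_apply,
            smul_eq_mul, measure_univ, mul_one]
          rw [← ENNReal.ofReal_add ha hb', hab, ENNReal.ofReal_one]
        set ρ : ProbabilityMeasure M := ⟨_, hρmeas⟩ with hρdef
        have hρMinv : ρ ∈ Minv := by
          rw [hMinv] at hm₁ hm₂ ⊢
          show Measure.map f (ENNReal.ofReal a • (m₁ : Measure M)
              + ENNReal.ofReal b' • (m₂ : Measure M))
            = ENNReal.ofReal a • (m₁ : Measure M) + ENNReal.ofReal b' • (m₂ : Measure M)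
          rw [Measure.map_add _ _ f.continuous.measurable,
            Measure.map_smul, Measure.map_smul]
          rw [show Measure.map f (m₁ : Measure M) = (m₁ : Measure M) from hm₁,
            show Measure.map f (m₂ : Measure M) = (m₂ : Measure M) from hm₂]
        have hρh : h ρ = a * h m₁ + b' * h m₂ :=
          haff m₁ hm₁ m₂ hm₂ ρ hρMinv a b' ha hb' hab rfl
        refine ⟨ρ, hρMinv, a * t₁ + b' * t₂, by positivity, ?_, ?_⟩
        · rw [hρh]
          exact add_le_add (mul_le_mul_of_nonneg_left ht₁ ha)
            (mul_le_mul_of_nonneg_left ht₂ hb')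
        · have hfst : a • intWD m₁ + b' • intWD m₂ = intWD ρ := by
            apply DFunLike.ext
            intro ψ
            have hint1 : Integrable (fun x => ψ x) (ENNReal.ofReal a • (m₁ : Measure M)) :=
              (aux_integrable ψ (m₁ : Measure M)).smul_measure ENNReal.ofReal_ne_top
            have hint2 : Integrable (fun x => ψ x) (ENNReal.ofReal b' • (m₂ : Measure M)) :=
              (aux_integrable ψ (m₂ : Measure M)).smul_measure ENNReal.ofReal_ne_top
            have : intWD ρ ψ = ∫ x, ψ x ∂(ENNReal.ofReal a • (m₁ : Measure M)
                + ENNReal.ofReal b' • (m₂ : Measure M)) := rfl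
            show a • intWD m₁ ψ + b' • intWD m₂ ψ = intWD ρ ψ
            rw [this, integral_add_measure hint1 hint2,
              integral_smul_measure, integral_smul_measure,
              ENNReal.toReal_ofReal ha, ENNReal.toReal_ofReal hb']
            simp only [smul_eq_mul]
            rfl
          show a • (intWD m₁, t₁) + b' • (intWD m₂, t₂) = (intWD ρ, a * t₁ + b' * t₂)
          rw [Prod.smul_mk, Prod.smul_mk, Prod.mk_add_mk, hfst]
          simp [smul_eq_mul]
      have hnotmem : (intWD ν, b) ∉ closure C := by
        intro hmem
        obtain ⟨u, huC, hulim⟩ := mem_closure_iff_ultrafilter.mp hmem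
        have hsel : ∀ q : WeakDual ℝ C(M, ℝ) × ℝ, ∃ mt : ProbabilityMeasure M × ℝ,
            q ∈ C → mt.1 ∈ Minv ∧ 0 ≤ mt.2 ∧ mt.2 ≤ h mt.1 ∧ q = (intWD mt.1, mt.2) := by
          intro q
          by_cases hq : q ∈ C
          · obtain ⟨m, hm, t, ht0, ht, hqe⟩ := hq
            exact ⟨(m, t), fun _ => ⟨hm, ht0, ht, hqe⟩⟩
          · exact ⟨(ν, 0), fun hq' => absurd hq' hq⟩
        choose σ hσ using hsel
        have hev : ∀ᶠ q in (u : Filter (WeakDual ℝ C(M, ℝ) × ℝ)),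
            (σ q).1 ∈ Minv ∧ 0 ≤ (σ q).2 ∧ (σ q).2 ≤ h (σ q).1 ∧ q = (intWD (σ q).1, (σ q).2) :=
          Filter.eventually_of_mem huC fun q hq => hσ q hq
        have hfst : Tendsto (fun q : WeakDual ℝ C(M, ℝ) × ℝ => q.1) u (𝓝 (intWD ν)) :=
          (continuous_fst.tendsto _).mono_left hulim
        have hsnd : Tendsto (fun q : WeakDual ℝ C(M, ℝ) × ℝ => q.2) u (𝓝 b) :=
          (continuous_snd.tendsto _).mono_left hulim
        have hmt : Tendsto (fun q => intWD ((σ q).1)) (u : Filter _) (𝓝 (intWD ν)) := by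
          apply hfst.congr'
          filter_upwards [hev] with q hq
          exact congrArg Prod.fst hq.2.2.2
        have hm_tendsto : Tendsto (fun q => (σ q).1) (u : Filter _) (𝓝 ν) := by
          rw [ProbabilityMeasure.tendsto_iff_forall_integral_tendsto]
          intro g
          have hevalg : Continuous fun x : WeakDual ℝ C(M, ℝ) => x g.toContinuousMap :=
            WeakDual.eval_continuous g.toContinuousMap
          have := (hevalg.tendsto (intWD ν)).comp hmt
          exact this
        have hsnd' : Tendsto (fun q => (σ q).2) (u : Filter _) (𝓝 b) := by
          apply hsnd.congr'
          filter_upwards [hev] with q hq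
          exact congrArg Prod.snd hq.2.2.2
        set b' := (h ν + b) / 2 with hb'def
        have hb'1 : h ν < b' := by rw [hb'def]; linarith
        have hb'2 : b' < b := by rw [hb'def]; linarith
        have husc' := husc ν hνMinv b' hb'1
        have hmem_ev : ∀ᶠ q in (u : Filter _), (σ q).1 ∈ Minv := hev.mono fun q hq => hq.1
        have hm_tendsto' : Tendsto (fun q => (σ q).1) (u : Filter _) (𝓝[Minv] ν) :=
          tendsto_nhdsWithin_iff.mpr ⟨hm_tendsto, hmem_ev⟩
        have hhlt : ∀ᶠ q in (u : Filter _), h ((σ q).1) < b' := hm_tendsto'.eventually husc'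
        have hgt : ∀ᶠ q in (u : Filter _), b' < (σ q).2 :=
          hsnd'.eventually (eventually_gt_nhds hb'2)
        obtain ⟨q, hq1, hq2, hq3⟩ := (hhlt.and (hgt.and hev)).exists
        have h9 := hq3.2.2.1
        linarith
      obtain ⟨F, u₀, hltF, hubF⟩ :=
        geometric_hahn_banach_point_closed hCconv.closure isClosed_closure hnotmem
      set G : WeakDual ℝ C(M, ℝ) →L[ℝ] ℝ :=
        F.comp (ContinuousLinearMap.inl ℝ (WeakDual ℝ C(M, ℝ)) ℝ) with hGdef
      set c : ℝ := F (0, 1) with hcdef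
      have hFsplit : ∀ (x : WeakDual ℝ C(M, ℝ)) (t : ℝ), F (x, t) = G x + t * c := by
        intro x t
        have hxt : (x, t) = (x, (0 : ℝ)) + t • ((0 : WeakDual ℝ C(M, ℝ)), (1 : ℝ)) := by
          simp
        rw [hxt, map_add, _root_.map_smul, smul_eq_mul]
        simp [hGdef, hcdef]
      have hubC : ∀ m ∈ Minv, u₀ < G (intWD m) + h m * c := by
        intro m hm
        have hmemC : (intWD m, h m) ∈ C := ⟨m, hm, h m, hpos m hm, le_refl _, rfl⟩
        have := hubF _ (subset_closure hmemC)
        rwa [hFsplit] at this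
      have hltF' : G (intWD ν) + b * c < u₀ := by rw [← hFsplit]; exact hltF
      have hcneg : c < 0 := by
        by_contra hc0
        push_neg at hc0
        have h1 := hubC ν hνMinv
        have h2 : h ν * c ≤ b * c := mul_le_mul_of_nonneg_right hb.le hc0
        linarith
      obtain ⟨χs, hχs⟩ := aux_weakDual_eval G
      set ψ₀ : C(M, ℝ) := c⁻¹ • χs with hψ₀def
      have hψ₀int : ∀ m : ProbabilityMeasure M,
          ∫ x, ψ₀ x ∂(m : Measure M) = c⁻¹ * ∫ x, χs x ∂(m : Measure M) := by
        intro m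
        rw [hψ₀def]
        simp only [ContinuousMap.smul_apply, smul_eq_mul]
        rw [integral_const_mul]
      have hPψ₀ : P ψ₀ ≤ u₀ / c := by
        apply (hP ψ₀).2
        rintro x ⟨m, hm, rfl⟩
        have h1 := hubC m hm
        rw [hχs, intWD_apply] at h1
        have h3 : h m < (u₀ - ∫ x, χs x ∂(m : Measure M)) / c := by
          rw [lt_div_iff_of_neg hcneg]
          linarith
        have h4 : (u₀ - ∫ x, χs x ∂(m : Measure M)) / c
            = u₀ / c - c⁻¹ * ∫ x, χs x ∂(m : Measure M) := by
          field_simp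
        rw [hψ₀int m]
        linarith
      have h5 : u₀ / c - ∫ y, ψ₀ y ∂(ν : Measure M) < b := by
        have h6 := hltF'
        rw [hχs, intWD_apply] at h6
        have h7 : (u₀ - ∫ x, χs x ∂(ν : Measure M)) / c < b := by
          rw [div_lt_iff_of_neg hcneg]
          linarith
        have h4 : (u₀ - ∫ x, χs x ∂(ν : Measure M)) / c
            = u₀ / c - c⁻¹ * ∫ x, χs x ∂(ν : Measure M) := by
          field_simp
        rw [hψ₀int ν]
        linarith
      have htan := htang (ψ₀ - φ)
      have hsum : φ + (ψ₀ - φ) = ψ₀ := by abel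
      rw [hsum, hn0] at htan
      simp only [Measure.coe_zero, integral_zero_measure, sub_zero] at htan
      have hsub2 : ∫ x, (ψ₀ - φ) x ∂p = ∫ x, ψ₀ x ∂p - ∫ x, φ x ∂p := by
        simp only [ContinuousMap.sub_apply]
        exact integral_sub (aux_integrable _ _) (aux_integrable _ _)
      rw [hsub2] at htan
      have hcoe1 : ∫ y, ψ₀ y ∂(ν : Measure M) = ∫ x, ψ₀ x ∂p := rfl
      have hcoe2 : ∫ y, φ y ∂(ν : Measure M) = ∫ x, φ x ∂p := rfl
      linarith
    by_contra hlt
    push_neg at hlt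
    have hlt' : h ν + ∫ y, φ y ∂(ν : Measure M) < P φ := lt_of_le_of_ne hub hlt
    have := hkey ((h ν + (P φ - ∫ y, φ y ∂(ν : Measure M))) / 2) (by linarith)
    linarith
  · -- easy direction
    rintro ⟨ν, hν, hμν, heq⟩ ψ
    have hn0 : n = 0 := by
      have hS' : μ S = (p S).toReal - (n S).toReal := happly S hSm
      rw [hpS] at hS'
      have hS'' : μ S = ((ν : Measure M) S).toReal := hμν S hSm
      have h1 : (n S).toReal = -((ν : Measure M) S).toReal := by
        simp only [ENNReal.toReal_zero, zero_sub] at hS'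
        linarith [hS''.symm.trans hS']
      have h2 : (n S).toReal = 0 := le_antisymm (by
          have : (0:ℝ) ≤ ((ν : Measure M) S).toReal := ENNReal.toReal_nonneg
          linarith) ENNReal.toReal_nonneg
      have h3 : n S = 0 := by
        have := ENNReal.toReal_eq_zero_iff (n S)
        rcases this.mp h2 with h | h
        · exact h
        · exact absurd h (measure_ne_top n S)
      apply Measure.measure_univ_eq_zero.mp
      have h' : n Set.univ ≤ n S + n Sᶜ := by
        rw [← Set.union_compl_self S]; exact measure_union_le _ _
      rw [h3, hnS] at h'
      simpa using h'
    have hpν : p = (ν : Measure M) := by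
      apply Measure.ext
      intro s hs
      have h1 := happly s hs
      rw [hn0] at h1
      simp only [Measure.coe_zero, Pi.zero_apply, ENNReal.toReal_zero, sub_zero] at h1
      have h2 := hμν s hs
      have h3 : (p s).toReal = ((ν : Measure M) s).toReal := by rw [← h1, h2]
      exact (ENNReal.toReal_eq_toReal_iff' (measure_ne_top p s) (measure_ne_top _ s)).mp h3
    rw [hn0, hpν]
    simp only [Measure.coe_zero, integral_zero_measure, sub_zero]
    have h1 := hPub (φ + ψ) ν hν
    have h2 := hintadd φ ψ (ν : Measure M) inferInstance
    rw [h2] at h1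
    linarith
end

section
/- Let M be a compact metric space, M_f(M) the compact convex set of f-invariant measures for a homeomorphism f, h : M_f(M) → [0,∞) affine, bounded, upper semicontinuous, P(φ) = sup{h(μ)+∫φdμ}, and t_φ the set of tangent functionals to P at φ. Suppose t_φ = {μ_φ} and for every ψ and every μ ∈ t_{φ+ψ} one has ‖μ - μ_φ‖ → 0 as ‖ψ‖ → 0 (in the total variation norm). Then P is Fréchet differentiable at φ with derivative ψ ↦ ∫ψ dμ_φ. -/
/-!
The pressure `P` is the supremum of the affine functionals `χ ↦ h ν + ∫ χ dν`, whose linear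
parts have norm at most `1`; hence `P` is convex and `1`-Lipschitz, and the Hahn–Banach
theorem applied to its open epigraph yields a tangent functional at every point. If `γ₀` is
tangent at `φ` and `γ` is tangent at `φ + ψ`, then
`0 ≤ P (φ + ψ) - P φ - γ₀ ψ ≤ (γ - γ₀) ψ ≤ ‖γ - γ₀‖ * ‖ψ‖`,
which is `o(‖ψ‖)` once the tangent functionals at `φ + ψ` tend to `γ₀`.
-/

open MeasureTheory Filter Topology Set

namespace ContinuousMap

variable {X : Type*} [TopologicalSpace X] [CompactSpace X] [MeasurableSpace X]
  [OpensMeasurableSpace X]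

theorem integrable_of_compactSpace (μ : Measure X) [IsFiniteMeasure μ] (f : C(X, ℝ)) :
    Integrable f μ :=
  f.continuous.integrable_of_hasCompactSupport (HasCompactSupport.of_compactSpace _)

noncomputable def integralCLM (μ : Measure X) [IsFiniteMeasure μ] : C(X, ℝ) →L[ℝ] ℝ :=
  LinearMap.mkContinuous
    { toFun := fun f => ∫ x, f x ∂μ
      map_add' := fun f g => integral_add (f.integrable_of_compactSpace μ)
        (g.integrable_of_compactSpace μ)
      map_smul' := fun c _ => integral_const_mul c _ }
    (μ.real univ)
    fun f => (norm_integral_le_of_norm_le_const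
      (Eventually.of_forall f.norm_coe_le_norm)).trans_eq (mul_comm _ _)

theorem norm_integralCLM_le_one (μ : Measure X) [IsProbabilityMeasure μ] :
    ‖integralCLM μ‖ ≤ 1 :=
  (LinearMap.mkContinuous_norm_le _ measureReal_nonneg _).trans_eq probReal_univ

end ContinuousMap

section ConvexAnalysis

variable {E : Type*} [NormedAddCommGroup E] [NormedSpace ℝ E]

/-- The paper's tangent functionals: `t_x = {γ | IsSubgradientAt P x γ}`. -/
def IsSubgradientAt (P : E → ℝ) (x : E) (γ : E →L[ℝ] ℝ) : Prop :=
  ∀ y, γ y ≤ P (x + y) - P x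

section AffineSup

variable {ι : Type*} {S : Set ι} {a : ι → ℝ} {L : ι → E →L[ℝ] ℝ} {P : E → ℝ}

theorem convexOn_of_isLUB_affine (hP : ∀ x, IsLUB {t | ∃ i ∈ S, t = a i + L i x} (P x)) :
    ConvexOn ℝ univ P := by
  refine ⟨convex_univ, fun x _ y _ s t hs ht hst => (hP _).2 ?_⟩
  rintro _ ⟨i, hi, rfl⟩
  have hx := (hP x).1 ⟨i, hi, rfl⟩
  have hy := (hP y).1 ⟨i, hi, rfl⟩
  calc a i + L i (s • x + t • y) = s * (a i + L i x) + t * (a i + L i y) := by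
        rw [map_add, map_smul, map_smul, smul_eq_mul, smul_eq_mul]
        linear_combination (-a i) * hst
    _ ≤ s • P x + t • P y := by
        rw [smul_eq_mul, smul_eq_mul]; gcongr

theorem lipschitzWith_of_isLUB_affine {K : NNReal} (hL : ∀ i ∈ S, ‖L i‖ ≤ K)
    (hP : ∀ x, IsLUB {t | ∃ i ∈ S, t = a i + L i x} (P x)) : LipschitzWith K P := by
  refine LipschitzWith.of_le_add_mul K fun x y => (hP x).2 ?_
  rintro _ ⟨i, hi, rfl⟩
  calc a i + L i x = (a i + L i y) + L i (x - y) := by rw [map_sub]; ring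
    _ ≤ P y + K * dist x y := by
        gcongr
        · exact (hP y).1 ⟨i, hi, rfl⟩
        · calc L i (x - y) ≤ ‖L i‖ * ‖x - y‖ := (le_abs_self _).trans ((L i).le_opNorm _)
            _ ≤ K * dist x y := by rw [dist_eq_norm]; gcongr; exact hL i hi

end AffineSup

theorem ConvexOn.exists_isSubgradientAt {P : E → ℝ} (hconv : ConvexOn ℝ univ P)
    (hcont : Continuous P) (x : E) : ∃ γ, IsSubgradientAt P x γ := by
  have hopen : IsOpen {p : E × ℝ | p.1 ∈ univ ∧ P p.1 < p.2} := by
    simpa using isOpen_lt (hcont.comp continuous_fst) continuous_snd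
  obtain ⟨F, hF⟩ := geometric_hahn_banach_open_point hconv.convex_strict_epigraph hopen
    (by simp : (x, P x) ∉ {p : E × ℝ | p.1 ∈ univ ∧ P p.1 < p.2})
  set g := F.comp (ContinuousLinearMap.inl ℝ E ℝ)
  set c := F (0, 1)
  have hF_apply : ∀ y t, F (y, t) = g y + t * c := fun y t =>
    calc F (y, t) = F ((y, 0) + t • (0, 1)) := by simp
      _ = g y + t * c := by rw [map_add, map_smul, smul_eq_mul]; rfl
  have hc : c < 0 := by
    have := hF (x, P x + 1) (by simp)
    rw [hF_apply, hF_apply] at this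
    linarith
  -- letting `t ↓ P y` in `F (y, t) < F (x, P x)`
  have hsupport : ∀ y, g y + P y * c ≤ g x + P x * c := fun y =>
    le_of_forall_pos_lt_add fun ε hε => by
      have := hF (y, P y + ε / -c) (by simp [div_pos hε (neg_pos.2 hc)])
      rw [hF_apply, hF_apply, add_mul, div_mul_eq_mul_div, div_neg,
        mul_div_cancel_right₀ _ hc.ne] at this
      linarith
  refine ⟨(-c)⁻¹ • g, fun y => ?_⟩
  have := hsupport (x + y)
  rw [map_add] at this
  rw [smul_apply, smul_eq_mul, inv_mul_le_iff₀ (neg_pos.2 hc)]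
  nlinarith

theorem IsSubgradientAt.abs_sub_sub_le {P : E → ℝ} {x ψ : E} {γ₀ γ : E →L[ℝ] ℝ}
    (h₀ : IsSubgradientAt P x γ₀) (h : IsSubgradientAt P (x + ψ) γ) :
    |P (x + ψ) - P x - γ₀ ψ| ≤ ‖γ - γ₀‖ * ‖ψ‖ := by
  have hlow := h₀ ψ
  have hup := h (-ψ)
  rw [add_neg_cancel_right, map_neg] at hup
  rw [abs_of_nonneg (by linarith)]
  calc P (x + ψ) - P x - γ₀ ψ ≤ (γ - γ₀) ψ := by
        rw [sub_apply]; linarith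
    _ ≤ ‖γ - γ₀‖ * ‖ψ‖ := (le_abs_self _).trans ((γ - γ₀).le_opNorm ψ)

theorem hasFDerivAt_of_tendsto_isSubgradientAt {P : E → ℝ} {x : E} {γ₀ : E →L[ℝ] ℝ}
    {g : E → E →L[ℝ] ℝ} (h₀ : IsSubgradientAt P x γ₀)
    (hg : ∀ᶠ z in 𝓝 x, IsSubgradientAt P z (g z)) (hlim : Tendsto g (𝓝 x) (𝓝 γ₀)) :
    HasFDerivAt P γ₀ x := by
  rw [hasFDerivAt_iff_isLittleO_nhds_zero, Asymptotics.isLittleO_iff]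
  intro ε hε
  have hshift : Tendsto (fun ψ => x + ψ) (𝓝 0) (𝓝 x) := by
    simpa using tendsto_const_nhds.add (tendsto_id (x := 𝓝 (0 : E)))
  filter_upwards [hshift.eventually hg, hshift.eventually (Metric.tendsto_nhds.1 hlim ε hε)]
    with ψ hsub hclose
  rw [Real.norm_eq_abs]
  exact (h₀.abs_sub_sub_le hsub).trans (by rw [← dist_eq_norm]; gcongr)

end ConvexAnalysis

theorem stmt_15_general {M : Type*} [MetricSpace M] [CompactSpace M]
    [MeasurableSpace M] [BorelSpace M]
    (Minv : Set (ProbabilityMeasure M))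
    (h : ProbabilityMeasure M → ℝ)
    (P : C(M, ℝ) → ℝ)
    (hP : ∀ χ : C(M, ℝ),
      IsLUB {x : ℝ | ∃ ν ∈ Minv, x = h ν + ∫ y, χ y ∂(ν : Measure M)} (P χ))
    (T : C(M, ℝ) → Set (C(M, ℝ) →L[ℝ] ℝ))
    (hT : ∀ χ : C(M, ℝ), T χ = {γ | ∀ ψ : C(M, ℝ), γ ψ ≤ P (χ + ψ) - P χ})
    (φ : C(M, ℝ))
    (γφ : C(M, ℝ) →L[ℝ] ℝ)
    (hsingle : T φ = {γφ})
    (hclose : ∀ ε > (0 : ℝ), ∃ δ > (0 : ℝ), ∀ ψ : C(M, ℝ), ‖ψ‖ < δ →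
      ∀ γ ∈ T (φ + ψ), ‖γ - γφ‖ < ε) :
    HasFDerivAt P γφ φ := by
  have hP' : ∀ χ, IsLUB {t | ∃ ν ∈ Minv,
      t = h ν + ContinuousMap.integralCLM (ν : Measure M) χ} (P χ) := hP
  have hconv : ConvexOn ℝ univ P := convexOn_of_isLUB_affine hP'
  have hcont : Continuous P := (lipschitzWith_of_isLUB_affine (K := 1)
    (fun ν _ => by simpa using ContinuousMap.norm_integralCLM_le_one (ν : Measure M))
    hP').continuous
  have hT' : ∀ χ γ, γ ∈ T χ ↔ IsSubgradientAt P χ γ := fun χ γ => by rw [hT]; rfl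
  choose g hg using hconv.exists_isSubgradientAt hcont
  refine hasFDerivAt_of_tendsto_isSubgradientAt ((hT' φ γφ).1 (by simp [hsingle]))
    (Eventually.of_forall hg) (Metric.tendsto_nhds_nhds.2 fun ε hε => ?_)
  obtain ⟨δ, hδ, hclose⟩ := hclose ε hε
  refine ⟨δ, hδ, fun z hz => ?_⟩
  rw [dist_eq_norm] at hz ⊢
  exact hclose (z - φ) hz (g z) ((hT' _ _).2 (by rw [add_sub_cancel]; exact hg z))

/-- Implication (7) ⇒ (1) of Theorem G in abstract form: if the tangent functionals to
the pressure-like function `P` at `φ` form the singleton `{γ_φ}`, where `γ_φ` is given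
by integration against an invariant probability measure `μ_φ`, and the tangent
functionals at `φ + ψ` converge in norm to `γ_φ` as `‖ψ‖ → 0`, then `P` is Fréchet
differentiable at `φ` with derivative `ψ ↦ ∫ ψ dμ_φ`. -/
theorem stmt_15 {M : Type*} [MetricSpace M] [CompactSpace M]
    [MeasurableSpace M] [BorelSpace M]
    (f : M ≃ₜ M)
    (Minv : Set (ProbabilityMeasure M))
    (hMinv : Minv = {ν : ProbabilityMeasure M |
      Measure.map f ν.toMeasure = ν.toMeasure})
    (h : ProbabilityMeasure M → ℝ)
    (hpos : ∀ ν ∈ Minv, 0 ≤ h ν)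
    (hbdd : ∃ C : ℝ, ∀ ν ∈ Minv, h ν ≤ C)
    (haff : ∀ ν₁ ∈ Minv, ∀ ν₂ ∈ Minv, ∀ ρ ∈ Minv, ∀ a b : ℝ, 0 ≤ a → 0 ≤ b →
      a + b = 1 →
      ρ.toMeasure = ENNReal.ofReal a • ν₁.toMeasure + ENNReal.ofReal b • ν₂.toMeasure →
      h ρ = a * h ν₁ + b * h ν₂)
    (husc : UpperSemicontinuousOn h Minv)
    (P : C(M, ℝ) → ℝ)
    (hP : ∀ χ : C(M, ℝ),
      IsLUB {x : ℝ | ∃ ν ∈ Minv, x = h ν + ∫ y, χ y ∂(ν : Measure M)} (P χ))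
    (T : C(M, ℝ) → Set (C(M, ℝ) →L[ℝ] ℝ))
    (hT : ∀ χ : C(M, ℝ), T χ = {γ | ∀ ψ : C(M, ℝ), γ ψ ≤ P (χ + ψ) - P χ})
    (φ : C(M, ℝ)) (μφ : ProbabilityMeasure M) (hμφ : μφ ∈ Minv)
    (γφ : C(M, ℝ) →L[ℝ] ℝ)
    (hγφ : ∀ ψ : C(M, ℝ), γφ ψ = ∫ y, ψ y ∂(μφ : Measure M))
    (hsingle : T φ = {γφ})
    (hclose : ∀ ε > (0 : ℝ), ∃ δ > (0 : ℝ), ∀ ψ : C(M, ℝ), ‖ψ‖ < δ →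
      ∀ γ ∈ T (φ + ψ), ‖γ - γφ‖ < ε) :
    HasFDerivAt P γφ φ :=
  stmt_15_general Minv h P hP T hT φ γφ hsingle hclose
end

section
/- Let M be a compact metric space, f a homeomorphism, h : M_f(M) → [0,∞) affine bounded upper semicontinuous, and P(φ) = sup{h(μ)+∫φdμ : μ ∈ M_f(M)}. Then the set of tangent functionals to P at φ consists of a single measure μ_φ if and only if: there is a unique μ_φ ∈ M_f(M) such that every sequence (μ_n) ⊂ M_f(M) with h(μ_n) + ∫φ dμ_n → P(φ) converges to μ_φ in the weak* topology. -/
open MeasureTheory Filter Topology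

set_option maxHeartbeats 1000000

/-- Lemma 7.4 in abstract form: the tangent functionals to the pressure-like function
`P` at `φ` consist of a single measure `μ_φ` if and only if there is a unique
`μ_φ ∈ M_f(M)` such that every maximizing sequence `(μ_n) ⊂ M_f(M)` (i.e. with
`h(μ_n) + ∫φ dμ_n → P(φ)`) converges to `μ_φ` in the weak* topology. -/
theorem stmt_16 {M : Type*} [MetricSpace M] [CompactSpace M]
    [MeasurableSpace M] [BorelSpace M]
    (f : M ≃ₜ M)
    (Minv : Set (ProbabilityMeasure M))
    (hMinv : Minv = {ν : ProbabilityMeasure M |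
      Measure.map f ν.toMeasure = ν.toMeasure})
    (h : ProbabilityMeasure M → ℝ)
    (hpos : ∀ ν ∈ Minv, 0 ≤ h ν)
    (hbdd : ∃ C : ℝ, ∀ ν ∈ Minv, h ν ≤ C)
    (haff : ∀ ν₁ ∈ Minv, ∀ ν₂ ∈ Minv, ∀ ρ ∈ Minv, ∀ a b : ℝ, 0 ≤ a → 0 ≤ b →
      a + b = 1 →
      ρ.toMeasure = ENNReal.ofReal a • ν₁.toMeasure + ENNReal.ofReal b • ν₂.toMeasure →
      h ρ = a * h ν₁ + b * h ν₂)
    (husc : UpperSemicontinuousOn h Minv)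
    (P : C(M, ℝ) → ℝ)
    (hP : ∀ χ : C(M, ℝ),
      IsLUB {x : ℝ | ∃ ν ∈ Minv, x = h ν + ∫ y, χ y ∂(ν : Measure M)} (P χ))
    (φ : C(M, ℝ)) :
    (∃ γ : C(M, ℝ) →L[ℝ] ℝ,
      {γ' : C(M, ℝ) →L[ℝ] ℝ | ∀ ψ : C(M, ℝ), γ' ψ ≤ P (φ + ψ) - P φ} = {γ} ∧
      ∃ μ ∈ Minv, ∀ ψ : C(M, ℝ), γ ψ = ∫ y, ψ y ∂(μ : Measure M)) ↔
    (∃! μφ : ProbabilityMeasure M, μφ ∈ Minv ∧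
      ∀ u : ℕ → ProbabilityMeasure M, (∀ n, u n ∈ Minv) →
        Tendsto (fun n => h (u n) + ∫ y, φ y ∂(u n : Measure M)) atTop (𝓝 (P φ)) →
        Tendsto u atTop (𝓝 μφ)) := by
  clear hMinv hpos hbdd haff f
  -- ## basic integration facts
  have int_ψ : ∀ (ψ : C(M, ℝ)) (ν : ProbabilityMeasure M),
      Integrable (fun y => ψ y) (ν : Measure M) :=
    fun ψ ν => (BoundedContinuousFunction.mkOfCompact ψ).integrable _
  have abs_int_le : ∀ (ψ : C(M, ℝ)) (ν : ProbabilityMeasure M),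
      |∫ y, ψ y ∂(ν : Measure M)| ≤ ‖ψ‖ := by
    intro ψ ν
    have := BoundedContinuousFunction.norm_integral_le_norm (μ := (ν : Measure M))
      (BoundedContinuousFunction.mkOfCompact ψ)
    simpa [BoundedContinuousFunction.norm_mkOfCompact] using this
  have int_add : ∀ (χ ψ : C(M, ℝ)) (ν : ProbabilityMeasure M),
      ∫ y, (χ + ψ) y ∂(ν : Measure M)
        = ∫ y, χ y ∂(ν : Measure M) + ∫ y, ψ y ∂(ν : Measure M) := by
    intro χ ψ ν
    simp only [ContinuousMap.add_apply]
    exact integral_add (int_ψ χ ν) (int_ψ ψ ν)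
  have int_smul : ∀ (t : ℝ) (ψ : C(M, ℝ)) (ν : ProbabilityMeasure M),
      ∫ y, (t • ψ) y ∂(ν : Measure M) = t * ∫ y, ψ y ∂(ν : Measure M) := by
    intro t ψ ν
    simp only [ContinuousMap.smul_apply, smul_eq_mul]
    rw [integral_const_mul]
  have int_tendsto : ∀ {u : ℕ → ProbabilityMeasure M} {ν : ProbabilityMeasure M},
      Tendsto u atTop (𝓝 ν) → ∀ ψ : C(M, ℝ),
      Tendsto (fun n => ∫ y, ψ y ∂(u n : Measure M)) atTop
        (𝓝 (∫ y, ψ y ∂(ν : Measure M))) := by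
    intro u ν hu ψ
    have := ProbabilityMeasure.tendsto_iff_forall_integral_tendsto.mp hu
      (BoundedContinuousFunction.mkOfCompact ψ)
    simpa using this
  -- ## basic facts about P
  have hub : ∀ (χ : C(M, ℝ)), ∀ ν ∈ Minv, h ν + ∫ y, χ y ∂(ν : Measure M) ≤ P χ :=
    fun χ ν hν => (hP χ).1 ⟨ν, hν, rfl⟩
  have P_le : ∀ (χ : C(M, ℝ)) (B : ℝ),
      (∀ ν ∈ Minv, h ν + ∫ y, χ y ∂(ν : Measure M) ≤ B) → P χ ≤ B := by
    intro χ B hB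
    refine (hP χ).2 ?_
    rintro x ⟨ν, hν, rfl⟩
    exact hB ν hν
  have hub' : ∀ (t : ℝ) (ψ : C(M, ℝ)), ∀ ν ∈ Minv,
      h ν + ∫ y, φ y ∂(ν : Measure M) + t * ∫ y, ψ y ∂(ν : Measure M)
        ≤ P (φ + t • ψ) := by
    intro t ψ ν hν
    have := hub (φ + t • ψ) ν hν
    rw [int_add, int_smul] at this
    linarith
  have Plip : ∀ χ₁ χ₂ : C(M, ℝ), P χ₁ ≤ P χ₂ + ‖χ₁ - χ₂‖ := by
    intro χ₁ χ₂
    refine P_le χ₁ _ fun ν hν => ?_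
    have e : ∫ y, χ₁ y ∂(ν : Measure M)
        = ∫ y, (χ₁ - χ₂) y ∂(ν : Measure M) + ∫ y, χ₂ y ∂(ν : Measure M) := by
      rw [← int_add (χ₁ - χ₂) χ₂ ν, sub_add_cancel]
    have hb := le_of_abs_le (abs_int_le (χ₁ - χ₂) ν)
    have := hub χ₂ ν hν
    rw [e]
    linarith
  have Pnorm : ∀ (t : ℝ) (ψ : C(M, ℝ)), |P (φ + t • ψ) - P φ| ≤ |t| * ‖ψ‖ := by
    intro t ψ
    have hn : ‖(t • ψ : C(M, ℝ))‖ = |t| * ‖ψ‖ :=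
      (norm_smul t ψ).trans (by rw [Real.norm_eq_abs])
    have h1 : P (φ + t • ψ) ≤ P φ + |t| * ‖ψ‖ := by
      have := Plip (φ + t • ψ) φ
      rwa [add_sub_cancel_left, hn] at this
    have h2 : P φ ≤ P (φ + t • ψ) + |t| * ‖ψ‖ := by
      have := Plip φ (φ + t • ψ)
      have e : φ - (φ + t • ψ) = -(t • ψ) := by abel
      rwa [e, norm_neg, hn] at this
    rw [abs_le]
    constructor <;> linarith
  -- ## the one-sided derivative function q
  set q : C(M, ℝ) → ℝ := fun ψ =>
    sInf {x : ℝ | ∃ t : ℝ, 0 < t ∧ x = (P (φ + t • ψ) - P φ) / t} with hq_def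
  have slope_lb : ∀ (ψ : C(M, ℝ)) (t : ℝ), 0 < t → -‖ψ‖ ≤ (P (φ + t • ψ) - P φ) / t := by
    intro ψ t ht
    have := (abs_le.mp (Pnorm t ψ)).1
    rw [le_div_iff₀ ht]
    rw [abs_of_pos ht] at this
    nlinarith
  have qS_ne : ∀ ψ : C(M, ℝ),
      {x : ℝ | ∃ t : ℝ, 0 < t ∧ x = (P (φ + t • ψ) - P φ) / t}.Nonempty :=
    fun ψ => ⟨_, 1, one_pos, rfl⟩
  have qS_bdd : ∀ ψ : C(M, ℝ),
      BddBelow {x : ℝ | ∃ t : ℝ, 0 < t ∧ x = (P (φ + t • ψ) - P φ) / t} := by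
    intro ψ
    refine ⟨-‖ψ‖, ?_⟩
    rintro x ⟨t, ht, rfl⟩
    exact slope_lb ψ t ht
  have q_le_slope : ∀ (ψ : C(M, ℝ)) (t : ℝ), 0 < t → q ψ ≤ (P (φ + t • ψ) - P φ) / t :=
    fun ψ t ht => csInf_le (qS_bdd ψ) ⟨t, ht, rfl⟩
  have q_lb : ∀ ψ : C(M, ℝ), -‖ψ‖ ≤ q ψ := by
    intro ψ
    refine le_csInf (qS_ne ψ) ?_
    rintro x ⟨t, ht, rfl⟩
    exact slope_lb ψ t ht
  have q_le_P : ∀ ψ : C(M, ℝ), q ψ ≤ P (φ + ψ) - P φ := by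
    intro ψ
    have := q_le_slope ψ 1 one_pos
    rwa [one_smul, div_one] at this
  have q_ub : ∀ ψ : C(M, ℝ), q ψ ≤ ‖ψ‖ := by
    intro ψ
    have h1 := q_le_P ψ
    have h2 := Pnorm 1 ψ
    rw [one_smul] at h2
    have := (abs_le.mp h2).2
    rw [abs_one, one_mul] at this
    linarith
  have q_exists_lt : ∀ (ψ : C(M, ℝ)) (ε : ℝ), 0 < ε →
      ∃ t : ℝ, 0 < t ∧ (P (φ + t • ψ) - P φ) / t < q ψ + ε := by
    intro ψ ε hε
    obtain ⟨x, ⟨t, ht, rfl⟩, hlt⟩ :=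
      exists_lt_of_csInf_lt (qS_ne ψ) (lt_add_of_pos_right (q ψ) hε)
    exact ⟨t, ht, hlt⟩
  have slope_mono : ∀ (ψ : C(M, ℝ)) (s t : ℝ), 0 < s → s ≤ t →
      (P (φ + s • ψ) - P φ) / s ≤ (P (φ + t • ψ) - P φ) / t := by
    intro ψ s t hs hst
    have ht : 0 < t := hs.trans_le hst
    have hconv : t * P (φ + s • ψ) ≤ (t - s) * P φ + s * P (φ + t • ψ) := by
      have key := P_le (φ + s • ψ) (((t - s) * P φ + s * P (φ + t • ψ)) / t) ?_
      · rw [le_div_iff₀ ht] at key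
        linarith
      intro ν hν
      have b1 := hub φ ν hν
      have b2 := hub' t ψ ν hν
      have e : ∫ y, (φ + s • ψ) y ∂(ν : Measure M)
          = ∫ y, φ y ∂(ν : Measure M) + s * ∫ y, ψ y ∂(ν : Measure M) := by
        rw [int_add, int_smul]
      rw [e, le_div_iff₀ ht]
      nlinarith [mul_le_mul_of_nonneg_left b1 (sub_nonneg.mpr hst),
        mul_le_mul_of_nonneg_left b2 hs.le]
    rw [div_le_div_iff₀ hs ht]
    nlinarith
  have q_smul : ∀ c : ℝ, 0 < c → ∀ ψ : C(M, ℝ), q (c • ψ) = c * q ψ := by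
    have q_smul_le : ∀ c : ℝ, 0 < c → ∀ ψ : C(M, ℝ), q (c • ψ) ≤ c * q ψ := by
      intro c hc ψ
      refine le_of_forall_pos_le_add fun ε hε => ?_
      obtain ⟨t, ht, hlt⟩ := q_exists_lt ψ (ε / c) (div_pos hε hc)
      have htc : 0 < t / c := div_pos ht hc
      have key : (P (φ + (t / c) • (c • ψ)) - P φ) / (t / c)
          = c * ((P (φ + t • ψ) - P φ) / t) := by
        rw [smul_smul, div_mul_cancel₀ _ hc.ne']
        field_simp
      have h1 := q_le_slope (c • ψ) (t / c) htc
      rw [key] at h1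
      have h2 : c * ((P (φ + t • ψ) - P φ) / t) ≤ c * (q ψ + ε / c) :=
        mul_le_mul_of_nonneg_left hlt.le hc.le
      have h3 : c * (q ψ + ε / c) = c * q ψ + ε := by
        rw [mul_add, mul_div_cancel₀ _ hc.ne']
      linarith
    intro c hc ψ
    refine le_antisymm (q_smul_le c hc ψ) ?_
    have h1 := q_smul_le c⁻¹ (inv_pos.mpr hc) (c • ψ)
    rw [smul_smul, inv_mul_cancel₀ hc.ne', one_smul] at h1
    have h2 := mul_le_mul_of_nonneg_left h1 hc.le
    rw [← mul_assoc, mul_inv_cancel₀ hc.ne', one_mul] at h2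
    exact h2
  have q_add : ∀ ψ₁ ψ₂ : C(M, ℝ), q (ψ₁ + ψ₂) ≤ q ψ₁ + q ψ₂ := by
    intro ψ₁ ψ₂
    refine le_of_forall_pos_le_add fun ε hε => ?_
    obtain ⟨t₁, ht₁, h₁⟩ := q_exists_lt ψ₁ (ε / 2) (by positivity)
    obtain ⟨t₂, ht₂, h₂⟩ := q_exists_lt ψ₂ (ε / 2) (by positivity)
    set t := min t₁ t₂ / 2 with htdef
    have ht : 0 < t := by positivity
    have h2t : 0 < 2 * t := by positivity
    have h2t1 : 2 * t ≤ t₁ := by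
      rw [htdef]
      have := min_le_left t₁ t₂
      linarith
    have h2t2 : 2 * t ≤ t₂ := by
      rw [htdef]
      have := min_le_right t₁ t₂
      linarith
    have hmono1 := slope_mono ψ₁ (2 * t) t₁ h2t h2t1
    have hmono2 := slope_mono ψ₂ (2 * t) t₂ h2t h2t2
    have hsplit : (P (φ + t • (ψ₁ + ψ₂)) - P φ) / t
        ≤ (P (φ + (2 * t) • ψ₁) - P φ) / (2 * t)
          + (P (φ + (2 * t) • ψ₂) - P φ) / (2 * t) := by
      have hPle : P (φ + t • (ψ₁ + ψ₂))
          ≤ (P (φ + (2 * t) • ψ₁) + P (φ + (2 * t) • ψ₂)) / 2 := by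
        refine P_le _ _ fun ν hν => ?_
        have b1 := hub' (2 * t) ψ₁ ν hν
        have b2 := hub' (2 * t) ψ₂ ν hν
        have e : ∫ y, (φ + t • (ψ₁ + ψ₂)) y ∂(ν : Measure M)
            = ∫ y, φ y ∂(ν : Measure M)
              + t * (∫ y, ψ₁ y ∂(ν : Measure M) + ∫ y, ψ₂ y ∂(ν : Measure M)) := by
          rw [int_add, int_smul, int_add]
        rw [e, le_div_iff₀ (by norm_num : (0:ℝ) < 2)]
        nlinarith
      rw [← add_div, div_le_div_iff₀ ht h2t]
      nlinarith
    have hq1 := q_le_slope (ψ₁ + ψ₂) t ht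
    calc q (ψ₁ + ψ₂) ≤ (P (φ + t • (ψ₁ + ψ₂)) - P φ) / t := hq1
      _ ≤ (P (φ + (2 * t) • ψ₁) - P φ) / (2 * t)
          + (P (φ + (2 * t) • ψ₂) - P φ) / (2 * t) := hsplit
      _ ≤ (P (φ + t₁ • ψ₁) - P φ) / t₁ + (P (φ + t₂ • ψ₂) - P φ) / t₂ :=
        add_le_add hmono1 hmono2
      _ ≤ (q ψ₁ + ε / 2) + (q ψ₂ + ε / 2) := add_le_add h₁.le h₂.le
      _ = q ψ₁ + q ψ₂ + ε := by ring
  have q_zero : q 0 = 0 := by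
    refine le_antisymm ?_ ?_
    · have := q_le_slope 0 1 one_pos
      simpa using this
    · have := q_lb 0
      simpa using this
  -- ## existence of maximizing sequences
  have exists_seq : ∃ u : ℕ → ProbabilityMeasure M, (∀ n, u n ∈ Minv) ∧
      Tendsto (fun n => h (u n) + ∫ y, φ y ∂(u n : Measure M)) atTop (𝓝 (P φ)) := by
    have hch : ∀ n : ℕ, ∃ ν, ν ∈ Minv ∧
        P φ - 1 / ((n : ℝ) + 1) < h ν + ∫ y, φ y ∂(ν : Measure M) := by
      intro n
      have hlt : P φ - 1 / ((n : ℝ) + 1) < P φ := by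
        have : (0:ℝ) < 1 / ((n : ℝ) + 1) := by positivity
        linarith
      obtain ⟨x, ⟨ν, hν, rfl⟩, hx, -⟩ := (hP φ).exists_between hlt
      exact ⟨ν, hν, hx⟩
    refine ⟨fun n => (hch n).choose, fun n => (hch n).choose_spec.1, ?_⟩
    have hlo : Tendsto (fun n : ℕ => P φ - 1 / ((n : ℝ) + 1)) atTop (𝓝 (P φ - 0)) :=
      Tendsto.sub tendsto_const_nhds tendsto_one_div_add_atTop_nhds_zero_nat
    rw [sub_zero] at hlo
    refine tendsto_of_tendsto_of_tendsto_of_le_of_le hlo tendsto_const_nhds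
      (fun n => ((hch n).choose_spec.2).le)
      (fun n => hub φ _ (hch n).choose_spec.1)
  -- ## the equivalence
  constructor
  · -- tangent functional unique → unique limit of maximizing sequences
    rintro ⟨γ, hset, μ, hμM, hγ⟩
    -- q equals γ everywhere, by Hahn-Banach
    have hq_eq : ∀ ψ : C(M, ℝ), q ψ = γ ψ := by
      intro ψ
      rcases eq_or_ne ψ 0 with rfl | hψ
      · rw [q_zero]; simp
      have q_neg : ∀ x : C(M, ℝ), -q (-x) ≤ q x := by
        intro x
        have := q_add x (-x)
        rw [add_neg_cancel, q_zero] at this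
        linarith
      set flin : C(M, ℝ) →ₗ.[ℝ] ℝ := LinearPMap.mkSpanSingleton (K := ℝ) ψ (q ψ) hψ with hflin
      have hfle : ∀ x : flin.domain, flin x ≤ q x := by
        rintro ⟨v, hv⟩
        obtain ⟨c, rfl⟩ := Submodule.mem_span_singleton.mp hv
        have happ : flin ⟨c • ψ, hv⟩ = c • (q ψ) :=
          LinearPMap.mkSpanSingleton'_apply ψ (q ψ) _ c hv
        rw [happ]
        rcases lt_trichotomy c 0 with hc | rfl | hc
        · have h1 : q (c • ψ) = (-c) * q (-ψ) := by
            rw [← q_smul (-c) (by linarith) (-ψ), smul_neg, neg_smul, neg_neg]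
          have h2 := q_neg ψ
          rw [smul_eq_mul]
          show c * q ψ ≤ q (c • ψ)
          rw [h1]
          nlinarith
        · simp [q_zero]
        · rw [q_smul c hc, smul_eq_mul]
      obtain ⟨g, hg_eq, hg_le⟩ := exists_extension_of_le_sublinear flin q q_smul q_add hfle
      have hgbdd : ∀ x, ‖g x‖ ≤ 1 * ‖x‖ := by
        intro x
        rw [one_mul, Real.norm_eq_abs, abs_le]
        constructor
        · have h1 := hg_le (-x)
          have h2 := q_ub (-x)
          rw [map_neg] at h1
          rw [norm_neg] at h2
          linarith
        · linarith [hg_le x, q_ub x]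
      set γ' : C(M, ℝ) →L[ℝ] ℝ := LinearMap.mkContinuous g 1 hgbdd with hγ'
      have hmem : γ' ∈ {γ' : C(M, ℝ) →L[ℝ] ℝ | ∀ ψ : C(M, ℝ), γ' ψ ≤ P (φ + ψ) - P φ} :=
        fun ψ' => le_trans (hg_le ψ') (q_le_P ψ')
      rw [hset, Set.mem_singleton_iff] at hmem
      have hψmem : ψ ∈ flin.domain := Submodule.mem_span_singleton_self ψ
      calc q ψ = flin ⟨ψ, hψmem⟩ := (LinearPMap.mkSpanSingleton_apply ℝ ℝ hψ (q ψ)).symm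
        _ = g ψ := (hg_eq ⟨ψ, hψmem⟩).symm
        _ = γ' ψ := rfl
        _ = γ ψ := by rw [hmem]
    -- every maximizing sequence converges to μ
    have key : ∀ u : ℕ → ProbabilityMeasure M, (∀ n, u n ∈ Minv) →
        Tendsto (fun n => h (u n) + ∫ y, φ y ∂(u n : Measure M)) atTop (𝓝 (P φ)) →
        Tendsto u atTop (𝓝 μ) := by
      intro u humem humax
      have upper : ∀ (ψ' : C(M, ℝ)) (c : ℝ), q ψ' < c →
          ∀ᶠ n in atTop, ∫ y, ψ' y ∂(u n : Measure M) < c := by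
        intro ψ' c hc
        set ε := c - q ψ' with hεdef
        have hε : 0 < ε := by rw [hεdef]; linarith
        obtain ⟨t, ht, hlt⟩ := q_exists_lt ψ' (ε / 2) (by positivity)
        have hev : ∀ᶠ n in atTop,
            P φ - t * ε / 2 < h (u n) + ∫ y, φ y ∂(u n : Measure M) :=
          humax.eventually (eventually_gt_nhds (by nlinarith))
        filter_upwards [hev] with n hn
        have hb := hub' t ψ' (u n) (humem n)
        have h5 : t * ∫ y, ψ' y ∂(u n : Measure M)
            ≤ P (φ + t • ψ') - (h (u n) + ∫ y, φ y ∂(u n : Measure M)) := by linarith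
        have hslope : (P (φ + t • ψ') - P φ) / t < q ψ' + ε / 2 := hlt
        rw [div_lt_iff₀ ht] at hslope
        have h6 : t * ∫ y, ψ' y ∂(u n : Measure M) < t * c := by nlinarith
        exact lt_of_mul_lt_mul_left h6 ht.le
      have main : ∀ ψ' : C(M, ℝ), Tendsto (fun n => ∫ y, ψ' y ∂(u n : Measure M)) atTop
          (𝓝 (γ ψ')) := by
        intro ψ'
        refine tendsto_order.mpr ⟨fun c hc => ?_, fun c hc => ?_⟩
        · have hqneg : q (-ψ') < -c := by
            rw [hq_eq (-ψ'), map_neg]; linarith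
          filter_upwards [upper (-ψ') (-c) hqneg] with n hn
          have e : ∫ y, (-ψ' : C(M, ℝ)) y ∂(u n : Measure M)
              = -∫ y, ψ' y ∂(u n : Measure M) := by
            simp only [ContinuousMap.neg_apply]
            exact integral_neg _
          rw [e] at hn
          linarith
        · refine upper ψ' c ?_
          rw [hq_eq ψ']
          exact hc
      rw [ProbabilityMeasure.tendsto_iff_forall_integral_tendsto]
      intro g
      have h1 := main g.toContinuousMap
      have h2 : γ g.toContinuousMap = ∫ ω, g ω ∂(μ : Measure M) := by
        rw [hγ g.toContinuousMap]
        simp only [BoundedContinuousFunction.coe_toContinuousMap]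
      rw [h2] at h1
      simpa only [BoundedContinuousFunction.coe_toContinuousMap] using h1
    refine ⟨μ, ⟨hμM, key⟩, ?_⟩
    rintro ν ⟨hν1, hν2⟩
    obtain ⟨u, humem, humax⟩ := exists_seq
    exact tendsto_nhds_unique (hν2 u humem humax) (key u humem humax)
  · -- unique limit of maximizing sequences → tangent functional unique
    rintro ⟨μφ, ⟨hμM, hconv⟩, -⟩
    -- μφ is an equilibrium state
    have hEq : h μφ + ∫ y, φ y ∂(μφ : Measure M) = P φ := by
      obtain ⟨u, humem, humax⟩ := exists_seq
      have hu : Tendsto u atTop (𝓝 μφ) := hconv u humem humax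
      have hint := int_tendsto hu φ
      have hh : Tendsto (fun n => h (u n)) atTop
          (𝓝 (P φ - ∫ y, φ y ∂(μφ : Measure M))) := by
        have := humax.sub hint
        simpa using this
      have hle : P φ - ∫ y, φ y ∂(μφ : Measure M) ≤ h μφ := by
        by_contra hcon
        push_neg at hcon
        set y := (h μφ + (P φ - ∫ y, φ y ∂(μφ : Measure M))) / 2 with hy
        have hy1 : h μφ < y := by rw [hy]; linarith
        have hy2 : y < P φ - ∫ y, φ y ∂(μφ : Measure M) := by rw [hy]; linarith
        have hev : ∀ᶠ ρ in 𝓝[Minv] μφ, h ρ < y := husc μφ hμM y hy1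
        have hu' : Tendsto u atTop (𝓝[Minv] μφ) :=
          tendsto_nhdsWithin_iff.mpr ⟨hu, Eventually.of_forall humem⟩
        have : ∀ᶠ n in atTop, h (u n) < y := hu'.eventually hev
        have := le_of_tendsto hh (this.mono fun n hn => hn.le)
        linarith
      have := hub φ μφ hμM
      linarith
    -- the tangent functional
    have hbound : ∀ ψ : C(M, ℝ),
        ‖∫ y, ψ y ∂(μφ : Measure M)‖ ≤ 1 * ‖ψ‖ := by
      intro ψ
      rw [one_mul, Real.norm_eq_abs]
      exact abs_int_le ψ μφ
    set γlin : C(M, ℝ) →ₗ[ℝ] ℝ :=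
      { toFun := fun ψ => ∫ y, ψ y ∂(μφ : Measure M)
        map_add' := fun χ ψ => int_add χ ψ μφ
        map_smul' := fun t ψ => by simpa using int_smul t ψ μφ } with hγlin
    set γ0 : C(M, ℝ) →L[ℝ] ℝ := LinearMap.mkContinuous γlin 1 hbound with hγ0
    have hγ0app : ∀ ψ : C(M, ℝ), γ0 ψ = ∫ y, ψ y ∂(μφ : Measure M) := fun ψ => rfl
    -- γ0 is a tangent functional
    have hγ0tan : ∀ ψ : C(M, ℝ), γ0 ψ ≤ P (φ + ψ) - P φ := by
      intro ψ
      have := hub (φ + ψ) μφ hμM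
      rw [int_add] at this
      rw [hγ0app]
      linarith
    -- every tangent functional equals γ0
    have htan_le : ∀ γ' : C(M, ℝ) →L[ℝ] ℝ,
        (∀ ψ : C(M, ℝ), γ' ψ ≤ P (φ + ψ) - P φ) →
        ∀ ψ : C(M, ℝ), γ' ψ ≤ ∫ y, ψ y ∂(μφ : Measure M) := by
      intro γ' hγ' ψ
      set t : ℕ → ℝ := fun n => 1 / ((n : ℝ) + 1) with htdef
      have htpos : ∀ n, 0 < t n := fun n => by positivity
      have ht0 : Tendsto t atTop (𝓝 0) := tendsto_one_div_add_atTop_nhds_zero_nat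
      -- choose ε-maximizers for φ + t n • ψ
      have hch : ∀ n : ℕ, ∃ ν, ν ∈ Minv ∧
          P (φ + t n • ψ) - (t n) ^ 2 < h ν + ∫ y, (φ + t n • ψ) y ∂(ν : Measure M) := by
        intro n
        have hlt : P (φ + t n • ψ) - (t n) ^ 2 < P (φ + t n • ψ) := by
          have := htpos n
          nlinarith
        obtain ⟨x, ⟨ν, hν, rfl⟩, hx, -⟩ := (hP (φ + t n • ψ)).exists_between hlt
        exact ⟨ν, hν, hx⟩
      set v : ℕ → ProbabilityMeasure M := fun n => (hch n).choose with hvdef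
      have hvM : ∀ n, v n ∈ Minv := fun n => (hch n).choose_spec.1
      have hvmax' : ∀ n, P (φ + t n • ψ) - (t n) ^ 2
          < h (v n) + ∫ y, φ y ∂(v n : Measure M)
            + t n * ∫ y, ψ y ∂(v n : Measure M) := by
        intro n
        have := (hch n).choose_spec.2
        rw [int_add, int_smul] at this
        linarith
      -- the v n form a maximizing sequence for φ
      have hvmax : Tendsto (fun n => h (v n) + ∫ y, φ y ∂(v n : Measure M)) atTop
          (𝓝 (P φ)) := by
        have hlow : ∀ n, P φ - (t n * (2 * ‖ψ‖) + (t n) ^ 2)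
            ≤ h (v n) + ∫ y, φ y ∂(v n : Measure M) := by
          intro n
          have h1 := hvmax' n
          have h2 := (abs_le.mp (Pnorm (t n) ψ)).1
          rw [abs_of_pos (htpos n)] at h2
          have h3 := le_of_abs_le (abs_int_le ψ (v n))
          have h4 := neg_le_of_abs_le (abs_int_le ψ (v n))
          have h5 := (htpos n).le
          nlinarith
        have hhigh : ∀ n, h (v n) + ∫ y, φ y ∂(v n : Measure M) ≤ P φ :=
          fun n => hub φ (v n) (hvM n)
        have hlo : Tendsto (fun n => P φ - (t n * (2 * ‖ψ‖) + (t n) ^ 2)) atTop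
            (𝓝 (P φ)) := by
          have : Tendsto (fun n => t n * (2 * ‖ψ‖) + (t n) ^ 2) atTop (𝓝 0) := by
            have h1 : Tendsto (fun n => t n * (2 * ‖ψ‖)) atTop (𝓝 (0 * (2 * ‖ψ‖))) :=
              ht0.mul_const _
            have h2 : Tendsto (fun n => (t n) ^ 2) atTop (𝓝 (0 ^ 2)) := ht0.pow 2
            have := h1.add h2
            simpa using this
          have h3 : Tendsto (fun n => P φ - (t n * (2 * ‖ψ‖) + (t n) ^ 2)) atTop
              (𝓝 (P φ - 0)) := Tendsto.sub tendsto_const_nhds this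
          simpa using h3
        exact tendsto_of_tendsto_of_tendsto_of_le_of_le hlo tendsto_const_nhds hlow hhigh
      have hv_tend : Tendsto v atTop (𝓝 μφ) := hconv v hvM hvmax
      have hint : Tendsto (fun n => ∫ y, ψ y ∂(v n : Measure M)) atTop
          (𝓝 (∫ y, ψ y ∂(μφ : Measure M))) := int_tendsto hv_tend ψ
      -- γ' ψ ≤ ∫ ψ d(v n) + t n for each n
      have hkey : ∀ n, γ' ψ ≤ ∫ y, ψ y ∂(v n : Measure M) + t n := by
        intro n
        have htan := hγ' (t n • ψ)
        rw [_root_.map_smul, smul_eq_mul] at htan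
        have h1 := hvmax' n
        have h2 := hub φ (v n) (hvM n)
        have h3 := (htpos n)
        -- t n * γ' ψ ≤ P (φ + t n • ψ) - P φ < t n * ∫ψ d(v n) + (t n)^2
        have h4 : t n * γ' ψ < t n * (∫ y, ψ y ∂(v n : Measure M) + t n) := by nlinarith
        exact (lt_of_mul_lt_mul_left h4 h3.le).le
      have hlim : Tendsto (fun n => ∫ y, ψ y ∂(v n : Measure M) + t n) atTop
          (𝓝 (∫ y, ψ y ∂(μφ : Measure M))) := by
        have := hint.add ht0
        simpa using this
      exact ge_of_tendsto hlim (Eventually.of_forall hkey)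
    refine ⟨γ0, ?_, μφ, hμM, hγ0app⟩
    ext γ'
    simp only [Set.mem_setOf_eq, Set.mem_singleton_iff]
    constructor
    · intro hγ'
      refine ContinuousLinearMap.ext fun ψ => ?_
      have h1 := htan_le γ' hγ' ψ
      have h2 := htan_le γ' hγ' (-ψ)
      have e : ∫ y, (-ψ : C(M, ℝ)) y ∂(μφ : Measure M)
          = -∫ y, ψ y ∂(μφ : Measure M) := by
        simp only [ContinuousMap.neg_apply]
        exact integral_neg _
      rw [map_neg, e] at h2
      rw [hγ0app]
      linarith
    · rintro rfl
      exact hγ0tan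
end
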